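/- arXiv:1404.4927 — 5 statements merged into one kernel-verified Lean document; each statement's English description precedes it below -/
import Mathlib

section
/- (Theorem 2) Let y = A·x_S where x_S ∈ ℝⁿ is K-sparse with support S, and A satisfies the RIP of order 3K with constant δ_{3K} < 1 such that ρ_{3K} := √(2δ_{3K}²(1+δ_{3K}²))/(1−δ_{3K}²) < 1. Let (x^n)_{n ≥ 0} be Subspace Pursuit iterates starting from x^0 = 0, each obtained from the previous by one SP iteration. Then x^{⌈cK⌉} = x_S, where c = ln(4/ρ_{3K}²)/ln(1/ρ_{3K}²). -/
/-!
Let `S = supp x_S`, and let `Sⁿ` be the support estimate of the `n`-th iteration. The classical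
analysis of one SP iteration, run with the RIP in the form `‖(AᵀA w - w)_T‖ ≤ δ ‖w‖` for `w`
supported on `T`, shows that the missed energy `bₙ = ‖(x_S)_{S \ Sⁿ}‖²` contracts:
`bₙ₊₁ ≤ ρ² bₙ`. Every missed index `j` has `x_j² ≤ bₙ`, so `bₙ ≤ ∑_{x_j² ≤ bₙ} x_j²`. Charging
step `n` the amount `x_j² / bₙ` for each such `j` charges at least `1` per step, while the
geometric decay of `b` charges each `j` at most `1 / (1 - ρ²)` in total. Hence `b` vanishes
before step `K / (1 - ρ²) ≤ cK`; then `S ⊆ Sⁿ`, and the least-squares solution on `Sⁿ` is `x_S`.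
-/

open Finset

/-- Euclidean norm of a vector. -/
noncomputable def euclNorm {d : ℕ} (x : Fin d → ℝ) : ℝ := Real.sqrt (∑ i, x i ^ 2)

/-- The support of a vector, as a finite set of indices. -/
noncomputable def supp {d : ℕ} (x : Fin d → ℝ) : Finset (Fin d) :=
  Finset.univ.filter (fun i => x i ≠ 0)

/-- `restrict x T` agrees with `x` on `T` and is zero outside `T`. -/
def restrict {d : ℕ} (x : Fin d → ℝ) (T : Finset (Fin d)) : Fin d → ℝ :=
  fun i => if i ∈ T then x i else 0

/-- `A` satisfies the Restricted Isometry Property of order `L` with constant `δ ∈ (0,1)`. -/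
def RIP {m d : ℕ} (A : Matrix (Fin m) (Fin d) ℝ) (L : ℕ) (δ : ℝ) : Prop :=
  0 < δ ∧ δ < 1 ∧
  ∀ x : Fin d → ℝ, (supp x).card ≤ L →
    (1 - δ) * euclNorm x ^ 2 ≤ euclNorm (A.mulVec x) ^ 2 ∧
    euclNorm (A.mulVec x) ^ 2 ≤ (1 + δ) * euclNorm x ^ 2

/-- `u` is the least-squares solution on the index set `U`: it is supported on `U` and
`y - A u` is orthogonal to `A z` whenever `z` is supported on `U`. -/
def LeastSq {m d : ℕ} (A : Matrix (Fin m) (Fin d) ℝ) (y : Fin m → ℝ)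
    (U : Finset (Fin d)) (u : Fin d → ℝ) : Prop :=
  supp u ⊆ U ∧ ∀ z : Fin d → ℝ, supp z ⊆ U →
    ∑ i, (y i - A.mulVec u i) * A.mulVec z i = 0

/-- One Subspace Pursuit iteration with sparsity `K`, mapping the iterate `xprev` to
`xnext`: identification (`h`, the `K` largest residual correlations), augmentation
(`supp xprev ∪ h`), least-squares estimation (`u`), selection of the `K` largest
entries of `u` (`Snext`), and a final least-squares solve on `Snext`. -/
def SPStep {m d : ℕ} (K : ℕ) (A : Matrix (Fin m) (Fin d) ℝ) (y : Fin m → ℝ)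
    (xprev xnext : Fin d → ℝ) : Prop :=
  ∃ (h Snext : Finset (Fin d)) (u : Fin d → ℝ),
    h.card = K ∧
    (∀ i ∈ h, ∀ j ∉ h,
      |A.transpose.mulVec (y - A.mulVec xprev) j| ≤
        |A.transpose.mulVec (y - A.mulVec xprev) i|) ∧
    LeastSq A y (supp xprev ∪ h) u ∧
    Snext ⊆ supp xprev ∪ h ∧ Snext.card = K ∧
    (∀ i ∈ Snext, ∀ j ∉ Snext, |u j| ≤ |u i|) ∧
    LeastSq A y Snext xnext

open Matrix

section

variable {m d : ℕ}

lemma supp_subset_iff {x : Fin d → ℝ} {T : Finset (Fin d)} :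
    supp x ⊆ T ↔ ∀ j ∉ T, x j = 0 := by
  simp only [supp, Finset.subset_iff, Finset.mem_filter, Finset.mem_univ, true_and]
  exact forall_congr' fun j => not_imp_comm

lemma sum_compl_sq_eq_sum_supp_sdiff (x : Fin d → ℝ) (V : Finset (Fin d)) :
    ∑ j ∈ Vᶜ, x j ^ 2 = ∑ j ∈ supp x \ V, x j ^ 2 := by
  refine (Finset.sum_subset (fun j hj => ?_) fun j _ hj => ?_).symm
  · exact Finset.mem_compl.2 (Finset.mem_sdiff.1 hj).2
  · simp_all [supp]

lemma euclNorm_sq (x : Fin d → ℝ) : euclNorm x ^ 2 = ∑ i, x i ^ 2 :=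
  Real.sq_sqrt (by positivity)

namespace RIP

variable {A : Matrix (Fin m) (Fin d) ℝ} {L : ℕ} {δ : ℝ}

lemma le_sum_sq (hA : RIP A L δ) {x : Fin d → ℝ} (hx : (supp x).card ≤ L) :
    (1 - δ) * ∑ j, x j ^ 2 ≤ ∑ i, (A *ᵥ x) i ^ 2 := by
  simpa only [euclNorm_sq] using (hA.2.2 x hx).1

lemma sum_sq_le (hA : RIP A L δ) {x : Fin d → ℝ} (hx : (supp x).card ≤ L) :
    ∑ i, (A *ᵥ x) i ^ 2 ≤ (1 + δ) * ∑ j, x j ^ 2 := by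
  simpa only [euclNorm_sq] using (hA.2.2 x hx).2

/-- Polarize the RIP at `δ • w ± r`, where `r` is the restriction of `Aᵀ A w - w` to `T`. -/
theorem sum_sq_gram_sub_le (hA : RIP A L δ) {T : Finset (Fin d)} (hT : T.card ≤ L)
    {w : Fin d → ℝ} (hw : supp w ⊆ T) :
    ∑ j ∈ T, ((Aᵀ *ᵥ (A *ᵥ w)) j - w j) ^ 2 ≤ δ ^ 2 * ∑ j, w j ^ 2 := by
  set c := Aᵀ *ᵥ (A *ᵥ w)
  set r := _root_.restrict (c - w) T
  set R := ∑ j ∈ T, (c j - w j) ^ 2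
  have hsupp : ∀ s : ℝ, (supp (δ • w + s • r)).card ≤ L := fun s =>
    (Finset.card_le_card <| supp_subset_iff.2 fun j hj => by
      simp [r, _root_.restrict, hj, supp_subset_iff.1 hw j hj]).trans hT
  have hup : (A *ᵥ (δ • w + r)) ⬝ᵥ (A *ᵥ (δ • w + r)) ≤ (1 + δ) * ((δ • w + r) ⬝ᵥ (δ • w + r)) := by
    simpa [dotProduct, sq] using hA.sum_sq_le (hsupp 1)
  have hlo : (1 - δ) * ((δ • w - r) ⬝ᵥ (δ • w - r)) ≤ (A *ᵥ (δ • w - r)) ⬝ᵥ (A *ᵥ (δ • w - r)) := by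
    simpa [dotProduct, sq, sub_eq_add_neg] using hA.le_sum_sq (hsupp (-1))
  have hAr : (A *ᵥ w) ⬝ᵥ (A *ᵥ r) = c ⬝ᵥ r := by
    rw [dotProduct_mulVec, ← mulVec_transpose]
  have hr : (c - w) ⬝ᵥ r = R := by
    simp [dotProduct, r, _root_.restrict, mul_ite, ← sq, Finset.sum_ite_mem, R]
  have hrr : r ⬝ᵥ r = R := by
    simp [dotProduct, r, _root_.restrict, Finset.sum_ite_mem, R, sq]
  have hww : w ⬝ᵥ w = ∑ j, w j ^ 2 := by simp [dotProduct, sq]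
  simp only [mulVec_add, mulVec_sub, mulVec_smul, add_dotProduct, dotProduct_add, sub_dotProduct,
    dotProduct_sub, smul_dotProduct, dotProduct_smul, smul_eq_mul] at hup hlo hr
  rw [dotProduct_comm (A *ᵥ r), dotProduct_comm r] at hup hlo
  have key : 2 * δ * R ≤ 2 * δ * (δ ^ 2 * (w ⬝ᵥ w)) := by
    linear_combination hup + hlo - 4 * δ * hAr - 4 * δ * hr + 2 * δ * hrr
  rw [← hww]
  exact le_of_mul_le_mul_left key (by linarith [hA.1])

end RIP

namespace LeastSq

variable {A : Matrix (Fin m) (Fin d) ℝ} {x v : Fin d → ℝ} {V : Finset (Fin d)}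

lemma gram_apply_eq_zero (hv : LeastSq A (A *ᵥ x) V v) {j : Fin d} (hj : j ∈ V) :
    (Aᵀ *ᵥ (A *ᵥ (x - v))) j = 0 := by
  have hsingle : supp (Pi.single j (1 : ℝ)) ⊆ V := supp_subset_iff.2 fun i hi => by
    simp [show i ≠ j from fun h => hi (h ▸ hj)]
  have := hv.2 _ hsingle
  simp only [mulVec_single_one, col_apply] at this
  rw [mulVec_sub, mulVec_transpose]
  exact this

variable {L : ℕ} {δ : ℝ}

lemma sum_sq_sub_le (hv : LeastSq A (A *ᵥ x) V v) (hA : RIP A L δ)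
    (hL : (supp x ∪ V).card ≤ L) :
    ∑ j ∈ V, (x - v) j ^ 2 ≤ δ ^ 2 * ∑ j, (x - v) j ^ 2 := by
  have he : supp (x - v) ⊆ supp x ∪ V := supp_subset_iff.2 fun j hj => by
    rw [Finset.mem_union, not_or] at hj
    simp [supp_subset_iff.1 subset_rfl j hj.1, supp_subset_iff.1 hv.1 j hj.2]
  calc ∑ j ∈ V, (x - v) j ^ 2
      = ∑ j ∈ V, ((Aᵀ *ᵥ (A *ᵥ (x - v))) j - (x - v) j) ^ 2 :=
        Finset.sum_congr rfl fun j hj => by rw [hv.gram_apply_eq_zero hj]; ring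
    _ ≤ ∑ j ∈ supp x ∪ V, ((Aᵀ *ᵥ (A *ᵥ (x - v))) j - (x - v) j) ^ 2 :=
        Finset.sum_le_sum_of_subset_of_nonneg Finset.subset_union_right
          fun _ _ _ => sq_nonneg _
    _ ≤ δ ^ 2 * ∑ j, (x - v) j ^ 2 := hA.sum_sq_gram_sub_le hL he

lemma sum_sq_eq_add (hv : LeastSq A (A *ᵥ x) V v) :
    ∑ j, (x - v) j ^ 2 = ∑ j ∈ V, (x - v) j ^ 2 + ∑ j ∈ supp x \ V, x j ^ 2 := by
  rw [← Finset.sum_add_sum_compl V, ← sum_compl_sq_eq_sum_supp_sdiff]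
  congr 1
  refine Finset.sum_congr rfl fun j hj => ?_
  rw [Pi.sub_apply, supp_subset_iff.1 hv.1 j (Finset.mem_compl.1 hj), sub_zero]

lemma one_sub_sq_mul_sum_sq_sub_le (hv : LeastSq A (A *ᵥ x) V v) (hA : RIP A L δ)
    (hL : (supp x ∪ V).card ≤ L) :
    (1 - δ ^ 2) * ∑ j, (x - v) j ^ 2 ≤ ∑ j ∈ supp x \ V, x j ^ 2 := by
  linarith [hv.sum_sq_eq_add, hv.sum_sq_sub_le hA hL]

theorem eq_of_supp_subset (hv : LeastSq A (A *ᵥ x) V v) (hA : RIP A L δ) (hV : V.card ≤ L)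
    (hx : supp x ⊆ V) : v = x := by
  have hL : (supp x ∪ V).card ≤ L := by rwa [Finset.union_eq_right.2 hx]
  have h := hv.one_sub_sq_mul_sum_sq_sub_le hA hL
  rw [Finset.sdiff_eq_empty_iff_subset.2 hx, Finset.sum_empty] at h
  have hδ : 0 < 1 - δ ^ 2 := by nlinarith [hA.1, hA.2.1]
  have h0 : ∑ j, (x - v) j ^ 2 = 0 :=
    le_antisymm (nonpos_of_mul_nonpos_right h hδ) (by positivity)
  funext j
  have := (Finset.sum_eq_zero_iff_of_nonneg fun i _ => sq_nonneg ((x - v) i)).1 h0 j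
    (Finset.mem_univ j)
  simpa [sub_eq_zero, eq_comm] using this

end LeastSq

lemma Finset.sum_le_sum_of_card_le_of_forall_le {ι M : Type*} [AddCommMonoid M] [LinearOrder M]
    [IsOrderedAddMonoid M] {f : ι → M} {s t : Finset ι} (hst : s.card ≤ t.card)
    (hf : ∀ i ∈ s, ∀ j ∈ t, f i ≤ f j) (ht : ∀ j ∈ t, 0 ≤ f j) :
    ∑ i ∈ s, f i ≤ ∑ j ∈ t, f j := by
  rcases s.eq_empty_or_nonempty with rfl | hs
  · simpa using Finset.sum_nonneg ht
  have htne : t.Nonempty := Finset.card_pos.1 (hs.card_pos.trans_le hst)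
  calc ∑ i ∈ s, f i ≤ s.card • t.inf' htne f :=
        Finset.sum_le_card_nsmul _ _ _ fun i hi => Finset.le_inf' _ _ fun j hj => hf i hi j hj
    _ ≤ t.card • t.inf' htne f :=
        nsmul_le_nsmul_left (Finset.le_inf' _ _ ht) hst
    _ ≤ ∑ j ∈ t, f j := Finset.card_nsmul_le_sum _ _ _ fun j hj => Finset.inf'_le _ hj

lemma Finset.sum_sq_le_sum_sq_of_card_le {ι : Type*} {f : ι → ℝ} {s t : Finset ι}
    (hst : s.card ≤ t.card) (hf : ∀ i ∈ s, ∀ j ∈ t, |f i| ≤ |f j|) :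
    ∑ i ∈ s, f i ^ 2 ≤ ∑ j ∈ t, f j ^ 2 :=
  Finset.sum_le_sum_of_card_le_of_forall_le hst (fun i hi j hj => sq_le_sq.2 (hf i hi j hj))
    fun _ _ => sq_nonneg _

lemma exists_seq_of_forall_exists {α : Type*} {P : ℕ → α → Prop} {R : α → α → Prop} {a : α}
    (ha : P 0 a) (h : ∀ n a, P n a → ∃ a', P (n + 1) a' ∧ R a a') :
    ∃ f : ℕ → α, ∀ n, P n (f n) ∧ R (f n) (f (n + 1)) := by
  choose! F hF using h
  let f : ℕ → α := fun n => Nat.rec a (fun n x => F n x) n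
  have hP : ∀ n, P n (f n) := fun n => Nat.rec ha (fun n ih => (hF n _ ih).1) n
  exact ⟨f, fun n => ⟨hP n, (hF n _ (hP n)).2⟩⟩

section SubspacePursuit

variable {A : Matrix (Fin m) (Fin d) ℝ} {L : ℕ} {δ : ℝ} {x : Fin d → ℝ}

/-- Identification: `c = AᵀA (x - xprev)` vanishes on `Sp` and agrees with the Gram defect
`c - (x - xprev)` off `supp x ∪ Sp`, and the selection rule bounds `c` on `supp x \ h` by `c` on
`h \ supp x`. -/
theorem sum_sq_sdiff_union_le (hA : RIP A L δ) {xprev : Fin d → ℝ} {Sp h : Finset (Fin d)}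
    (hL : (supp x ∪ Sp ∪ h).card ≤ L) (hxh : (supp x).card ≤ h.card)
    (hprev : LeastSq A (A *ᵥ x) Sp xprev)
    (hsel : ∀ i ∈ h, ∀ j ∉ h, |(Aᵀ *ᵥ (A *ᵥ x - A *ᵥ xprev)) j| ≤
      |(Aᵀ *ᵥ (A *ᵥ x - A *ᵥ xprev)) i|) :
    ∑ j ∈ supp x \ (supp xprev ∪ h), x j ^ 2 ≤ 2 * δ ^ 2 * ∑ j, (x - xprev) j ^ 2 := by
  set S := supp x
  set w := x - xprev
  set c := Aᵀ *ᵥ (A *ᵥ w)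
  set M := S \ (supp xprev ∪ h)
  have hw : supp w ⊆ S ∪ Sp ∪ h := supp_subset_iff.2 fun j hj => by
    simp only [Finset.mem_union, not_or] at hj
    simp [w, supp_subset_iff.1 subset_rfl j hj.1.1, supp_subset_iff.1 hprev.1 j hj.1.2]
  have hc : ∑ j ∈ S \ h, c j ^ 2 ≤ ∑ j ∈ h \ S, c j ^ 2 := by
    refine Finset.sum_sq_le_sum_sq_of_card_le (Finset.card_sdiff_le_card_sdiff_iff.2 hxh)
      fun j hj i hi => ?_
    simpa only [c, w, mulVec_sub] using hsel i (Finset.mem_sdiff.1 hi).1 j (Finset.mem_sdiff.1 hj).2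
  have hcr : ∀ j ∉ S, c j ^ 2 ≤ (c j - w j) ^ 2 := by
    intro j hj
    by_cases hjp : j ∈ Sp
    · simpa [show c j = 0 from hprev.gram_apply_eq_zero hjp] using sq_nonneg (w j)
    · rw [show w j = 0 by
        simp [w, supp_subset_iff.1 subset_rfl j hj, supp_subset_iff.1 hprev.1 j hjp], sub_zero]
  have hxM : ∀ j ∈ M, x j = c j + -(c j - w j) := by
    intro j hj
    have hjp : j ∉ supp xprev := fun h' => (Finset.mem_sdiff.1 hj).2 (Finset.mem_union_left _ h')
    simp [w, supp_subset_iff.1 subset_rfl j hjp]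
  have hdisj : Disjoint (h \ S) M := Finset.disjoint_left.2 fun j hj hjM =>
    (Finset.mem_sdiff.1 hj).2 (Finset.mem_sdiff.1 hjM).1
  have hsub : h \ S ∪ M ⊆ S ∪ Sp ∪ h := by
    intro j hj
    simp only [Finset.mem_union, Finset.mem_sdiff, M] at hj ⊢
    tauto
  calc ∑ j ∈ M, x j ^ 2
      ≤ ∑ j ∈ M, 2 * (c j ^ 2 + (c j - w j) ^ 2) :=
        Finset.sum_le_sum fun j hj => by rw [hxM j hj, ← neg_sq (c j - w j)]; exact add_sq_le
    _ = 2 * (∑ j ∈ M, c j ^ 2 + ∑ j ∈ M, (c j - w j) ^ 2) := by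
        rw [← Finset.mul_sum, Finset.sum_add_distrib]
    _ ≤ 2 * (∑ j ∈ h \ S, (c j - w j) ^ 2 + ∑ j ∈ M, (c j - w j) ^ 2) := by
        gcongr
        calc ∑ j ∈ M, c j ^ 2 ≤ ∑ j ∈ S \ h, c j ^ 2 :=
              Finset.sum_le_sum_of_subset_of_nonneg
                (Finset.sdiff_subset_sdiff subset_rfl Finset.subset_union_right)
                fun _ _ _ => sq_nonneg _
          _ ≤ ∑ j ∈ h \ S, c j ^ 2 := hc
          _ ≤ ∑ j ∈ h \ S, (c j - w j) ^ 2 :=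
              Finset.sum_le_sum fun j hj => hcr j (Finset.mem_sdiff.1 hj).2
    _ ≤ 2 * ∑ j ∈ S ∪ Sp ∪ h, (c j - w j) ^ 2 := by
        rw [← Finset.sum_union hdisj]
        gcongr
    _ ≤ 2 * δ ^ 2 * ∑ j, w j ^ 2 := by
        rw [mul_assoc]
        gcongr
        exact hA.sum_sq_gram_sub_le hL hw

theorem LeastSq.one_sub_sq_mul_sum_sq_sdiff_le {U Sn : Finset (Fin d)} {u : Fin d → ℝ}
    (hu : LeastSq A (A *ᵥ x) U u) (hA : RIP A L δ) (hL : (supp x ∪ U).card ≤ L)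
    (hSn : Sn ⊆ U) (hcard : (supp x).card ≤ Sn.card) (hsel : ∀ i ∈ Sn, ∀ j ∉ Sn, |u j| ≤ |u i|) :
    (1 - δ ^ 2) * ∑ j ∈ supp x \ Sn, x j ^ 2 ≤ (1 + δ ^ 2) * ∑ j ∈ supp x \ U, x j ^ 2 := by
  set S := supp x
  set e := x - u
  have hE := hu.sum_sq_eq_add
  have hEU := hu.sum_sq_sub_le hA hL
  have hlow := hu.one_sub_sq_mul_sum_sq_sub_le hA hL
  have hxe : ∀ j ∈ (S \ Sn) ∩ U, x j = u j + e j := fun j _ => by simp [e]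
  have hue : ∀ j ∈ Sn \ S, u j ^ 2 = e j ^ 2 := fun j hj => by
    simp [e, supp_subset_iff.1 subset_rfl j (Finset.mem_sdiff.1 hj).2]
  have hu2 : ∑ j ∈ (S \ Sn) ∩ U, u j ^ 2 ≤ ∑ j ∈ Sn \ S, e j ^ 2 :=
    calc ∑ j ∈ (S \ Sn) ∩ U, u j ^ 2 ≤ ∑ j ∈ S \ Sn, u j ^ 2 :=
          Finset.sum_le_sum_of_subset_of_nonneg Finset.inter_subset_left
            fun _ _ _ => sq_nonneg _
      _ ≤ ∑ j ∈ Sn \ S, u j ^ 2 :=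
          Finset.sum_sq_le_sum_sq_of_card_le (Finset.card_sdiff_le_card_sdiff_iff.2 hcard)
            fun j hj i hi => hsel i (Finset.mem_sdiff.1 hi).1 j (Finset.mem_sdiff.1 hj).2
      _ = ∑ j ∈ Sn \ S, e j ^ 2 := Finset.sum_congr rfl hue
  have hdisj : Disjoint (Sn \ S) ((S \ Sn) ∩ U) := Finset.disjoint_left.2 fun j hj hj' =>
    (Finset.mem_sdiff.1 hj).2 (Finset.mem_sdiff.1 (Finset.mem_inter.1 hj').1).1
  have hsub : Sn \ S ∪ (S \ Sn) ∩ U ⊆ U := Finset.union_subset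
    (Finset.sdiff_subset.trans hSn) Finset.inter_subset_right
  have hprune : ∑ j ∈ S \ Sn, x j ^ 2 ≤ ∑ j ∈ S \ U, x j ^ 2 + 2 * ∑ j ∈ U, e j ^ 2 := by
    rw [← Finset.sum_inter_add_sum_sdiff (S \ Sn) U, add_comm]
    gcongr ?_ + ?_
    · exact Finset.sum_le_sum_of_subset_of_nonneg
        (Finset.sdiff_subset_sdiff Finset.sdiff_subset subset_rfl) fun _ _ _ => sq_nonneg _
    · calc ∑ j ∈ (S \ Sn) ∩ U, x j ^ 2
          ≤ ∑ j ∈ (S \ Sn) ∩ U, 2 * (u j ^ 2 + e j ^ 2) :=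
            Finset.sum_le_sum fun j hj => by rw [hxe j hj]; exact add_sq_le
        _ = 2 * (∑ j ∈ (S \ Sn) ∩ U, u j ^ 2 + ∑ j ∈ (S \ Sn) ∩ U, e j ^ 2) := by
            rw [← Finset.mul_sum, Finset.sum_add_distrib]
        _ ≤ 2 * (∑ j ∈ Sn \ S, e j ^ 2 + ∑ j ∈ (S \ Sn) ∩ U, e j ^ 2) := by gcongr
        _ ≤ 2 * ∑ j ∈ U, e j ^ 2 := by rw [← Finset.sum_union hdisj]; gcongr
  have hδ : δ ^ 2 ≤ 1 := by nlinarith [hA.1, hA.2.1]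
  nlinarith [Finset.sum_nonneg fun j (_ : j ∈ U) => sq_nonneg (e j)]

theorem SPStep.exists_contraction {K : ℕ} (hA : RIP A (3 * K) δ) {xprev xnext : Fin d → ℝ}
    {Sp : Finset (Fin d)} (hx : (supp x).card ≤ K) (hSp : Sp.card ≤ K)
    (hprev : LeastSq A (A *ᵥ x) Sp xprev) (hstep : SPStep K A (A *ᵥ x) xprev xnext) :
    ∃ Sn : Finset (Fin d), Sn.card ≤ K ∧ LeastSq A (A *ᵥ x) Sn xnext ∧
      ∑ j ∈ supp x \ Sn, x j ^ 2 ≤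
        2 * δ ^ 2 * (1 + δ ^ 2) / (1 - δ ^ 2) ^ 2 * ∑ j ∈ supp x \ Sp, x j ^ 2 := by
  obtain ⟨h, Sn, u, hh, hsel, hu, hSnU, hSn, hselu, hnext⟩ := hstep
  have hprevK := (Finset.card_le_card hprev.1).trans hSp
  have hxU : (supp x ∪ (supp xprev ∪ h)).card ≤ 3 * K := by
    grw [Finset.card_union_le, Finset.card_union_le]; omega
  have hxSp : (supp x ∪ Sp).card ≤ 3 * K := by grw [Finset.card_union_le]; omega
  have hxSph : (supp x ∪ Sp ∪ h).card ≤ 3 * K := by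
    grw [Finset.card_union_le, Finset.card_union_le]; omega
  have hδ : 0 < 1 - δ ^ 2 := by nlinarith [hA.1, hA.2.1]
  have hw := hprev.one_sub_sq_mul_sum_sq_sub_le hA hxSp
  have hid := sum_sq_sdiff_union_le hA hxSph (hh ▸ hx) hprev hsel
  have hpr := hu.one_sub_sq_mul_sum_sq_sdiff_le hA hxU hSnU (hSn ▸ hx) hselu
  refine ⟨Sn, hSn.le, hnext, ?_⟩
  rw [div_mul_eq_mul_div, le_div_iff₀ (by positivity)]
  calc (∑ j ∈ supp x \ Sn, x j ^ 2) * (1 - δ ^ 2) ^ 2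
      = (1 - δ ^ 2) * ((1 - δ ^ 2) * ∑ j ∈ supp x \ Sn, x j ^ 2) := by ring
    _ ≤ (1 - δ ^ 2) * ((1 + δ ^ 2) * (2 * δ ^ 2 * ∑ j, (x - xprev) j ^ 2)) :=
        mul_le_mul_of_nonneg_left (hpr.trans (by gcongr)) hδ.le
    _ = 2 * δ ^ 2 * (1 + δ ^ 2) * ((1 - δ ^ 2) * ∑ j, (x - xprev) j ^ 2) := by ring
    _ ≤ 2 * δ ^ 2 * (1 + δ ^ 2) * ∑ j ∈ supp x \ Sp, x j ^ 2 := by gcongr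

theorem SPStep.exists_support_seq {K : ℕ} (hA : RIP A (3 * K) δ) (hx : (supp x).card ≤ K)
    {X : ℕ → Fin d → ℝ} (hX0 : X 0 = 0)
    (hsteps : ∀ n, SPStep K A (A *ᵥ x) (X n) (X (n + 1))) :
    ∃ T : ℕ → Finset (Fin d), ∀ n,
      ((T n).card ≤ K ∧ LeastSq A (A *ᵥ x) (T n) (X n)) ∧
        ∑ j ∈ supp x \ T (n + 1), x j ^ 2 ≤
          2 * δ ^ 2 * (1 + δ ^ 2) / (1 - δ ^ 2) ^ 2 * ∑ j ∈ supp x \ T n, x j ^ 2 := by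
  refine exists_seq_of_forall_exists (a := ∅)
    (P := fun n T => T.card ≤ K ∧ LeastSq A (A *ᵥ x) T (X n))
    (R := fun T T' => ∑ j ∈ supp x \ T', x j ^ 2 ≤
      2 * δ ^ 2 * (1 + δ ^ 2) / (1 - δ ^ 2) ^ 2 * ∑ j ∈ supp x \ T, x j ^ 2) ?_
    fun n Sp hSp => ?_
  · refine ⟨by simp, by simp [supp, hX0], fun z hz => ?_⟩
    simp [show z = 0 from funext fun j => supp_subset_iff.1 hz j (Finset.notMem_empty j)]
  · obtain ⟨Sn, hcard, hLS, hb⟩ := (hsteps n).exists_contraction hA hx hSp.1 hSp.2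
    exact ⟨Sn, ⟨hcard, hLS⟩, hb⟩

end SubspacePursuit

section IterationCount

variable {b : ℕ → ℝ} {g : ℝ}

lemma sum_ite_div_le_of_geometric_decay (hg0 : 0 ≤ g) (hg1 : g < 1)
    (hdecay : ∀ n, b (n + 1) ≤ g * b n) {a : ℝ} (ha : 0 ≤ a) :
    ∀ N, (∀ n ≤ N, 0 < b n) →
      ∑ n ∈ Finset.range (N + 1), (if a ≤ b n then a / b n else 0) ≤ min 1 (a / b N) / (1 - g)
  | 0, hpos => by
    have hb := hpos 0 le_rfl
    rw [Finset.sum_range_one]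
    refine le_trans ?_ (le_div_self (by positivity) (by linarith) (by linarith))
    split_ifs with h
    · exact le_min ((div_le_one hb).2 h) le_rfl
    · exact le_min zero_le_one (by positivity)
  | N + 1, hpos => by
    have hbN := hpos N N.le_succ
    have hbN1 := hpos (N + 1) le_rfl
    have ih := sum_ite_div_le_of_geometric_decay hg0 hg1 hdecay ha N
      fun n hn => hpos n (hn.trans N.le_succ)
    rw [Finset.sum_range_succ]
    split_ifs with h
    · have hstep : a / b N ≤ g * (a / b (N + 1)) := by
        rw [mul_div_assoc', div_le_div_iff₀ hbN hbN1]
        nlinarith [hdecay N]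
      rw [min_eq_right ((div_le_one hbN1).2 h)]
      calc _ ≤ g * (a / b (N + 1)) / (1 - g) + a / b (N + 1) := by
            gcongr
            exact ih.trans (div_le_div_of_nonneg_right ((min_le_right _ _).trans hstep)
              (by linarith))
        _ = a / b (N + 1) / (1 - g) := by
            have : 1 - g ≠ 0 := by linarith
            field_simp
            ring
    · rw [add_zero, min_eq_left ((one_le_div hbN1).2 (not_le.1 h).le)]
      exact ih.trans (div_le_div_of_nonneg_right (min_le_left _ _) (by linarith))

theorem succ_mul_one_sub_le_card {ι : Type*} (S : Finset ι) {q : ι → ℝ}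
    (hq : ∀ j ∈ S, 0 ≤ q j) (hg0 : 0 ≤ g) (hg1 : g < 1) (hdecay : ∀ n, b (n + 1) ≤ g * b n)
    {N : ℕ} (hpos : ∀ n ≤ N, 0 < b n)
    (hcover : ∀ n ≤ N, b n ≤ ∑ j ∈ S with q j ≤ b n, q j) :
    ((N : ℝ) + 1) * (1 - g) ≤ S.card := by
  rw [← le_div_iff₀ (by linarith)]
  calc (N : ℝ) + 1 = ∑ n ∈ Finset.range (N + 1), 1 := by simp
    _ ≤ ∑ n ∈ Finset.range (N + 1), ∑ j ∈ S, (if q j ≤ b n then q j / b n else 0) := by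
        refine Finset.sum_le_sum fun n hn => ?_
        have hn := Finset.mem_range_succ_iff.1 hn
        rw [← Finset.sum_filter, ← Finset.sum_div]
        exact (one_le_div (hpos n hn)).2 (hcover n hn)
    _ = ∑ j ∈ S, ∑ n ∈ Finset.range (N + 1), (if q j ≤ b n then q j / b n else 0) :=
        Finset.sum_comm
    _ ≤ ∑ j ∈ S, 1 / (1 - g) := Finset.sum_le_sum fun j hj =>
        (sum_ite_div_le_of_geometric_decay hg0 hg1 hdecay (hq j hj) N hpos).trans
          (div_le_div_of_nonneg_right (min_le_left _ _) (by linarith))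
    _ = S.card / (1 - g) := by simp [div_eq_mul_inv]

theorem subset_of_sum_sdiff_decay {ι : Type*} [DecidableEq ι] {S : Finset ι} {q : ι → ℝ}
    (hq : ∀ j ∈ S, 0 < q j) {T : ℕ → Finset ι} (hg0 : 0 ≤ g) (hg1 : g < 1)
    (hdecay : ∀ n, ∑ j ∈ S \ T (n + 1), q j ≤ g * ∑ j ∈ S \ T n, q j) {N : ℕ}
    (hN : S.card ≤ N * (1 - g)) : S ⊆ T N := by
  set b := fun n => ∑ j ∈ S \ T n, q j
  have hnonneg : ∀ n, 0 ≤ b n := fun n =>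
    Finset.sum_nonneg fun j hj => (hq j (Finset.mem_sdiff.1 hj).1).le
  have hanti : Antitone b := antitone_nat_of_succ_le fun n =>
    (hdecay n).trans (mul_le_of_le_one_left (hnonneg n) hg1.le)
  by_contra hST
  obtain ⟨j, hj⟩ := Finset.nonempty_of_ne_empty (mt Finset.sdiff_eq_empty_iff_subset.1 hST)
  have hbN : 0 < b N := (hq j (Finset.mem_sdiff.1 hj).1).trans_le
    (Finset.single_le_sum (fun i hi => (hq i (Finset.mem_sdiff.1 hi).1).le) hj)
  have hcover : ∀ n, b n ≤ ∑ j ∈ S with q j ≤ b n, q j := fun n =>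
    Finset.sum_le_sum_of_subset_of_nonneg (fun i hi => Finset.mem_filter.2
      ⟨(Finset.mem_sdiff.1 hi).1,
        Finset.single_le_sum (fun k hk => (hq k (Finset.mem_sdiff.1 hk).1).le) hi⟩)
      fun i hi _ => (hq i (Finset.mem_filter.1 hi).1).le
  have := succ_mul_one_sub_le_card S (fun i hi => (hq i hi).le) hg0 hg1 hdecay
    (fun n hn => hbN.trans_le (hanti hn)) fun n _ => hcover n
  linarith

end IterationCount

end

lemma one_le_log_four_div_div_log_one_div_mul {g : ℝ} (hg0 : 0 < g) (hg1 : g < 1) :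
    1 ≤ Real.log (4 / g) / Real.log (1 / g) * (1 - g) := by
  have hL : 0 < Real.log (1 / g) := Real.log_pos ((one_lt_div hg0).2 hg1)
  have hlog : g * Real.log (1 / g) ≤ 1 - g :=
    calc g * Real.log (1 / g) ≤ g * (1 / g - 1) :=
          mul_le_mul_of_nonneg_left (Real.log_le_sub_one_of_pos (by positivity)) hg0.le
      _ = 1 - g := by field_simp
  have hlog4 : 1 ≤ Real.log 4 := by
    rw [show (4 : ℝ) = 2 ^ 2 by norm_num, Real.log_pow]
    push_cast
    linarith [Real.log_two_gt_d9]
  rw [div_mul_eq_mul_div, le_div_iff₀ hL, show 4 / g = 4 * (1 / g) by ring,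
    Real.log_mul (by norm_num) (by positivity)]
  nlinarith

theorem sp_convergence_general
    {m d K : ℕ}
    (A : Matrix (Fin m) (Fin d) ℝ) (xS : Fin d → ℝ)
    (δ3 ρ3 c : ℝ)
    (hxS : (supp xS).card ≤ K)
    (hRIP3 : RIP A (3 * K) δ3)
    (hρ3 : ρ3 = Real.sqrt (2 * δ3 ^ 2 * (1 + δ3 ^ 2)) / (1 - δ3 ^ 2))
    (hρ3lt : ρ3 < 1)
    (hc : c = Real.log (4 / ρ3 ^ 2) / Real.log (1 / ρ3 ^ 2))
    (X : ℕ → Fin d → ℝ) (hX0 : X 0 = 0)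
    (hsteps : ∀ i : ℕ, SPStep K A (A.mulVec xS) (X i) (X (i + 1))) :
    X ⌈c * K⌉₊ = xS := by
  have hδ : 0 < 1 - δ3 ^ 2 := by nlinarith [hRIP3.1, hRIP3.2.1]
  have hρ0 : 0 < ρ3 := hρ3 ▸ div_pos (Real.sqrt_pos.2 (by nlinarith [hRIP3.1])) hδ
  have hg : ρ3 ^ 2 = 2 * δ3 ^ 2 * (1 + δ3 ^ 2) / (1 - δ3 ^ 2) ^ 2 := by
    rw [hρ3, div_pow, Real.sq_sqrt (by positivity)]
  have hg1 : ρ3 ^ 2 < 1 := by nlinarith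
  obtain ⟨T, hT⟩ := SPStep.exists_support_seq hRIP3 hxS hX0 hsteps
  have hK : ((supp xS).card : ℝ) ≤ ⌈c * K⌉₊ * (1 - ρ3 ^ 2) :=
    calc ((supp xS).card : ℝ) ≤ K := by exact_mod_cast hxS
      _ ≤ c * K * (1 - ρ3 ^ 2) := by
          have := hc ▸ one_le_log_four_div_div_log_one_div_mul (by positivity) hg1
          nlinarith [(K.cast_nonneg : (0 : ℝ) ≤ K)]
      _ ≤ ⌈c * K⌉₊ * (1 - ρ3 ^ 2) :=
          mul_le_mul_of_nonneg_right (Nat.le_ceil _) (by linarith)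
  have hsub : supp xS ⊆ T ⌈c * K⌉₊ :=
    subset_of_sum_sdiff_decay (fun j hj => pow_two_pos_of_ne_zero (Finset.mem_filter.1 hj).2)
      (sq_nonneg _) hg1 (fun n => hg ▸ (hT n).2) hK
  exact (hT _).1.2.eq_of_supp_subset hRIP3 (by linarith [(hT ⌈c * K⌉₊).1.1]) hsub

/-- Theorem 2: with noiseless measurements `y = A x_S`, Subspace Pursuit
recovers `x_S` exactly in `⌈cK⌉` iterations, where `c = ln(4/ρ_{3K}²)/ln(1/ρ_{3K}²)`. -/
theorem sp_convergence
    {m d K : ℕ} (hK : 0 < K)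
    (A : Matrix (Fin m) (Fin d) ℝ) (xS : Fin d → ℝ)
    (δ3 ρ3 c : ℝ)
    (hxS : (supp xS).card ≤ K)
    (hRIP3 : RIP A (3 * K) δ3)
    (hρ3 : ρ3 = Real.sqrt (2 * δ3 ^ 2 * (1 + δ3 ^ 2)) / (1 - δ3 ^ 2))
    (hρ3lt : ρ3 < 1)
    (hc : c = Real.log (4 / ρ3 ^ 2) / Real.log (1 / ρ3 ^ 2))
    (X : ℕ → Fin d → ℝ) (hX0 : X 0 = 0)
    (hsteps : ∀ i : ℕ, SPStep K A (A.mulVec xS) (X i) (X (i + 1))) :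
    X ⌈c * K⌉₊ = xS :=
  sp_convergence_general A xS δ3 ρ3 c hxS hRIP3 hρ3 hρ3lt hc X hX0 hsteps
end

section
/- For every real δ with 0 < δ < 1/√5, setting ρ² = 2δ²(1+2δ²)/(1−δ²), one has 0 < ρ² < 1 and ln(4/ρ²)/ln(1/ρ²) < 5. -/
/-- for `0 < δ < 1/√5` and `ρ² = 2δ²(1+2δ²)/(1−δ²)` (the squared CoSaMP
contraction factor), one has `0 < ρ² < 1` and `ln(4/ρ²)/ln(1/ρ²) < 5`. -/
theorem cosamp_iteration_constant_lt_five
    (δ : ℝ) (hδ0 : 0 < δ) (hδ : δ < 1 / Real.sqrt 5)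
    (ρsq : ℝ) (hρsq : ρsq = 2 * δ ^ 2 * (1 + 2 * δ ^ 2) / (1 - δ ^ 2)) :
    0 < ρsq ∧ ρsq < 1 ∧ Real.log (4 / ρsq) / Real.log (1 / ρsq) < 5 := by
  have hs5 : Real.sqrt 5 > 0 := Real.sqrt_pos.mpr (by norm_num)
  have ht : δ ^ 2 < 1 / 5 := by
    have h1 : δ * Real.sqrt 5 < 1 := (lt_div_iff₀ hs5).mp hδ
    have h2 : Real.sqrt 5 ^ 2 = 5 := Real.sq_sqrt (by norm_num)
    nlinarith [mul_pos hδ0 hs5]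
  have ht0 : 0 < δ ^ 2 := by positivity
  have hden : 0 < 1 - δ ^ 2 := by nlinarith
  have hρ0 : 0 < ρsq := by
    rw [hρsq]; positivity
  have hρ7 : ρsq < 7 / 10 := by
    rw [hρsq, div_lt_iff₀ hden]
    nlinarith [sq_nonneg δ]
  have hρ1 : ρsq < 1 := by linarith
  refine ⟨hρ0, hρ1, ?_⟩
  have hlogneg : Real.log ρsq < 0 := Real.log_neg hρ0 hρ1
  have hkey : Real.log 4 < 4 * (-Real.log ρsq) := by
    have h1 : (4 : ℝ) < (ρsq⁻¹) ^ 4 := by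
      rw [inv_pow, lt_inv_comm₀ (by norm_num) (by positivity)]
      have h3 : ρsq ^ 4 < (7/10) ^ 4 := by
        exact pow_lt_pow_left₀ hρ7 hρ0.le (by norm_num)
      nlinarith
    have h2 := Real.log_lt_log (by norm_num) h1
    rw [Real.log_pow, Real.log_inv, Nat.cast_ofNat] at h2
    linarith
  rw [one_div, Real.log_inv,
    div_lt_iff₀ (by linarith), Real.log_div (by norm_num) (ne_of_gt hρ0)]
  linarith
end

section
/- For every real δ with 0 < δ < 1/√5, setting ρ² = 2δ²(1+δ²)/(1−δ²)², one has 0 < ρ² < 1 and ln(4/ρ²)/ln(1/ρ²) < 6. -/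
/-- for `0 < δ < 1/√5` and `ρ² = 2δ²(1+δ²)/(1−δ²)²` (the squared SP
contraction factor), one has `0 < ρ² < 1` and `ln(4/ρ²)/ln(1/ρ²) < 6`. -/
theorem sp_iteration_constant_lt_six
    (δ : ℝ) (hδ0 : 0 < δ) (hδ : δ < 1 / Real.sqrt 5)
    (ρsq : ℝ) (hρsq : ρsq = 2 * δ ^ 2 * (1 + δ ^ 2) / (1 - δ ^ 2) ^ 2) :
    0 < ρsq ∧ ρsq < 1 ∧ Real.log (4 / ρsq) / Real.log (1 / ρsq) < 6 := by
  have hx : δ ^ 2 < 1 / 5 := by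
    have h1 : δ ^ 2 < (1 / Real.sqrt 5) ^ 2 := by
      exact pow_lt_pow_left₀ hδ hδ0.le (by norm_num)
    have h2 : (1 / Real.sqrt 5 : ℝ) ^ 2 = 1 / 5 := by
      rw [div_pow, one_pow, Real.sq_sqrt (by norm_num : (0:ℝ) ≤ 5)]
    linarith
  have hx0 : 0 < δ ^ 2 := pow_pos hδ0 2
  have hne : (0:ℝ) < 1 - δ ^ 2 := by nlinarith
  have hden : (0:ℝ) < (1 - δ ^ 2) ^ 2 := by positivity
  have hρ0 : 0 < ρsq := by
    rw [hρsq]; positivity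
  have hρ34 : ρsq < 3 / 4 := by
    rw [hρsq, div_lt_iff₀ hden]
    nlinarith
  have hρ1 : ρsq < 1 := by linarith
  refine ⟨hρ0, hρ1, ?_⟩
  have hinv : (1:ℝ) < 1 / ρsq := by
    rw [lt_div_iff₀ hρ0]; linarith
  have hlpos : 0 < Real.log (1 / ρsq) := Real.log_pos hinv
  rw [div_lt_iff₀ hlpos]
  -- suffices: log (4/ρsq) < 6 log (1/ρsq), i.e. log 4 < 5 log (1/ρsq)
  have h4 : (4:ℝ) < (1 / ρsq) ^ 5 := by
    have h5 : ρsq ^ 5 < 1 / 4 := by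
      calc ρsq ^ 5 < (3/4) ^ 5 := pow_lt_pow_left₀ hρ34 hρ0.le (by norm_num)
        _ < 1 / 4 := by norm_num
    rw [div_pow, one_pow, lt_div_iff₀ (by positivity)]
    nlinarith [pow_pos hρ0 5]
  have hlog4 : Real.log 4 < 5 * Real.log (1 / ρsq) := by
    have := Real.log_lt_log (by norm_num : (0:ℝ) < 4) h4
    rw [Real.log_pow] at this; push_cast at this; linarith
  have hsplit : Real.log (4 / ρsq) = Real.log 4 + Real.log (1 / ρsq) := by
    rw [show (4:ℝ) / ρsq = 4 * (1 / ρsq) by ring,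
      Real.log_mul (by norm_num) (by positivity)]
  rw [hsplit]; linarith
end

section
/- Let ρ ∈ (0,1), let r, K be positive integers, and let a_1, …, a_r be positive integers with a_1 + ⋯ + a_r = K. Then Σ_{i=1}^{r} ⌈ ln( 2·Σ_{j=i}^{r} a_j·2^{i−j} ) / ln(1/ρ²) ⌉ < K · ln(4/ρ²)/ln(1/ρ²). -/
/-!
Write `Sᵢ = ∑_{j ≥ i} a_j / 2^(j-i)` and `L = log (1/ρ²)`. Since `⌈y⌉ < y + 1`, the sum of
ceilings is less than `∑ (log (2 Sᵢ) + L) / L`, so it suffices to bound `∑ (log (2 Sᵢ) + L)` by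
`K (log 4 + L) = K log (4/ρ²)`. Exchanging the order of summation, each `a_j` is counted with
geometric weights of total less than `2`, so `∑ Sᵢ ≤ 2K`. The tangent line of `log` at `4` gives
`log (2 Sᵢ) ≤ log 4 - 1 + Sᵢ / 2`, hence `∑ (log (2 Sᵢ) + L) ≤ r (log 4 - 1 + L) + K`, which is
at most `K (log 4 + L)` because `r ≤ K` and `log 4 > 1`.
-/

open Finset

lemma sum_Iic_pow_sub_le {n : ℕ} (j : Fin n) {q : ℝ} (hq0 : 0 ≤ q) (hq1 : q < 1) :
    ∑ i ∈ Iic j, q ^ ((j : ℕ) - i) ≤ (1 - q)⁻¹ := by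
  calc ∑ i ∈ Iic j, q ^ ((j : ℕ) - i) = ∑ m ∈ range ((j : ℕ) + 1), q ^ ((j : ℕ) - m) := by
        rw [Nat.range_succ_eq_Iic, ← Fin.map_valEmbedding_Iic, sum_map]
        rfl
    _ = ∑ m ∈ range ((j : ℕ) + 1), q ^ m := sum_range_reflect (q ^ ·) _
    _ ≤ (1 - q)⁻¹ := by
        simpa [← range_eq_Ico] using geom_sum_Ico_le_of_lt_one (m := 0) (n := j + 1) hq0 hq1

lemma sum_sum_Ici_mul_pow_sub_le {n : ℕ} (f : Fin n → ℝ) (hf : ∀ j, 0 ≤ f j) {q : ℝ}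
    (hq0 : 0 ≤ q) (hq1 : q < 1) :
    ∑ i, ∑ j ∈ Ici i, f j * q ^ ((j : ℕ) - i) ≤ (∑ j, f j) / (1 - q) := by
  calc ∑ i, ∑ j ∈ Ici i, f j * q ^ ((j : ℕ) - i)
      = ∑ j, f j * ∑ i ∈ Iic j, q ^ ((j : ℕ) - i) := by
        simp_rw [mul_sum]
        exact sum_comm' fun i j => by simp
    _ ≤ ∑ j, f j * (1 - q)⁻¹ :=
        sum_le_sum fun j _ => mul_le_mul_of_nonneg_left (sum_Iic_pow_sub_le j hq0 hq1) (hf j)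
    _ = (∑ j, f j) / (1 - q) := by rw [sum_div]; simp_rw [div_eq_mul_inv]

lemma sum_sum_Ici_div_two_pow_sub_le {n : ℕ} (f : Fin n → ℝ) (hf : ∀ j, 0 ≤ f j) :
    ∑ i, ∑ j ∈ Ici i, f j / 2 ^ ((j : ℕ) - i) ≤ 2 * ∑ j, f j := by
  calc ∑ i, ∑ j ∈ Ici i, f j / 2 ^ ((j : ℕ) - i) ≤ (∑ j, f j) / (1 - 1 / 2) := by
        simpa only [one_div, inv_pow, ← div_eq_mul_inv] using
          sum_sum_Ici_mul_pow_sub_le f hf (q := 1 / 2) (by norm_num) (by norm_num)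
    _ = 2 * ∑ j, f j := by ring

lemma le_sum_Ici_div_two_pow_sub {n : ℕ} (f : Fin n → ℝ) (hf : ∀ j, 0 ≤ f j) (i : Fin n) :
    f i ≤ ∑ j ∈ Ici i, f j / 2 ^ ((j : ℕ) - i) := by
  simpa using single_le_sum (f := fun j => f j / 2 ^ ((j : ℕ) - i))
    (fun j _ => div_nonneg (hf j) (by positivity)) (mem_Ici.mpr (le_refl i))

lemma Real.log_le_log_add_div_sub_one {x c : ℝ} (hx : 0 < x) (hc : 0 < c) :
    Real.log x ≤ Real.log c + x / c - 1 := by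
  have := Real.log_le_sub_one_of_pos (div_pos hx hc)
  rw [Real.log_div hx.ne' hc.ne'] at this
  linarith

lemma Real.sum_log_le_card_mul_add_sum_div {ι : Type*} (s : Finset ι) {x : ι → ℝ}
    (hx : ∀ i ∈ s, 0 < x i) {c : ℝ} (hc : 0 < c) :
    ∑ i ∈ s, Real.log (x i) ≤ #s * (Real.log c - 1) + (∑ i ∈ s, x i) / c := by
  calc ∑ i ∈ s, Real.log (x i) ≤ ∑ i ∈ s, (Real.log c - 1 + x i / c) :=
        sum_le_sum fun i hi => by linarith [Real.log_le_log_add_div_sub_one (hx i hi) hc]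
    _ = #s * (Real.log c - 1) + (∑ i ∈ s, x i) / c := by
        rw [sum_add_distrib, sum_const, nsmul_eq_mul, sum_div]

lemma Real.one_lt_log_four : 1 < Real.log 4 := by
  rw [show (4 : ℝ) = 2 ^ 2 by norm_num, Real.log_pow]
  push_cast
  linarith [Real.log_two_gt_d9]

lemma sum_log_two_mul_add_le {ι : Type*} (s : Finset ι) {x : ι → ℝ} (hx : ∀ i ∈ s, 0 < x i)
    {K L : ℝ} (hsum : ∑ i ∈ s, x i ≤ 2 * K) (hsK : #s ≤ K) (hL : 0 ≤ L) :
    ∑ i ∈ s, (Real.log (2 * x i) + L) ≤ K * (Real.log 4 + L) := by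
  have hlog :=
    Real.sum_log_le_card_mul_add_sum_div s (fun i hi => mul_pos two_pos (hx i hi)) four_pos
  rw [← mul_sum] at hlog
  rw [sum_add_distrib, sum_const, nsmul_eq_mul]
  nlinarith [Real.one_lt_log_four]

lemma sum_ceil_lt_sum_add_card {ι : Type*} {s : Finset ι} (hs : s.Nonempty) (f : ι → ℝ) :
    ((∑ i ∈ s, ⌈f i⌉ : ℤ) : ℝ) < ∑ i ∈ s, f i + #s := by
  push_cast
  rw [← nsmul_one, ← sum_const, ← sum_add_distrib]
  exact sum_lt_sum_of_nonempty hs fun i _ => Int.ceil_lt_add_one (f i)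

theorem cosamp_iteration_count_general
    (ρ : ℝ) (hρ0 : 0 < ρ) (hρ1 : ρ < 1)
    (r K : ℕ) (hr : 0 < r)
    (a : Fin r → ℕ) (ha : ∀ i, 0 < a i) (hsum : ∑ i, a i = K) :
    ((∑ i : Fin r,
        ⌈Real.log (2 * ∑ j ∈ Finset.Ici i, (a j : ℝ) / 2 ^ ((j : ℕ) - (i : ℕ))) /
          Real.log (1 / ρ ^ 2)⌉ : ℤ) : ℝ) <
      (K : ℝ) * (Real.log (4 / ρ ^ 2) / Real.log (1 / ρ ^ 2)) := by
  set L := Real.log (1 / ρ ^ 2)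
  set S : Fin r → ℝ := fun i => ∑ j ∈ Ici i, (a j : ℝ) / 2 ^ ((j : ℕ) - (i : ℕ))
  have hL : 0 < L := Real.log_pos (one_lt_one_div (by positivity) (by nlinarith))
  have ha' : ∀ j, 0 ≤ (a j : ℝ) := fun j => Nat.cast_nonneg _
  have hS_pos : ∀ i ∈ univ, 0 < S i := fun i _ =>
    (Nat.cast_pos.mpr (ha i)).trans_le (le_sum_Ici_div_two_pow_sub _ ha' i)
  have hS_sum : ∑ i, S i ≤ 2 * K := by
    simpa [← hsum] using sum_sum_Ici_div_two_pow_sub_le _ ha'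
  have hrK : r ≤ K := by
    simpa [← hsum] using card_nsmul_le_sum univ a 1 fun i _ => ha i
  have : Nonempty (Fin r) := ⟨⟨0, hr⟩⟩
  calc _ < ∑ i, Real.log (2 * S i) / L + r := by
        simpa using sum_ceil_lt_sum_add_card univ_nonempty fun i => Real.log (2 * S i) / L
    _ = (∑ i, (Real.log (2 * S i) + L)) / L := by
        rw [sum_add_distrib, add_div, sum_div, sum_const, card_univ, Fintype.card_fin,
          nsmul_eq_mul, mul_div_cancel_right₀ _ hL.ne']
    _ ≤ K * (Real.log 4 + L) / L := by
        gcongr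
        exact sum_log_two_mul_add_le univ hS_pos hS_sum (by simpa using hrK) hL.le
    _ = K * (Real.log (4 / ρ ^ 2) / L) := by
        rw [div_eq_mul_one_div 4, Real.log_mul four_ne_zero (by positivity), mul_div_assoc]

/-- the counting argument of Theorem 1.  If the support of size `K` is
split into `r` blocks of positive sizes `a 1, …, a r` (here indexed by `Fin r`), then
the total number of iterations `Σᵢ ⌈ln(2 Σ_{j≥i} a_j 2^{i−j}) / ln(1/ρ²)⌉` is less than
`K · ln(4/ρ²)/ln(1/ρ²)`. -/
theorem cosamp_iteration_count
    (ρ : ℝ) (hρ0 : 0 < ρ) (hρ1 : ρ < 1)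
    (r K : ℕ) (hr : 0 < r) (hK : 0 < K)
    (a : Fin r → ℕ) (ha : ∀ i, 0 < a i) (hsum : ∑ i, a i = K) :
    ((∑ i : Fin r,
        ⌈Real.log (2 * ∑ j ∈ Finset.Ici i, (a j : ℝ) / 2 ^ ((j : ℕ) - (i : ℕ))) /
          Real.log (1 / ρ ^ 2)⌉ : ℤ) : ℝ) <
      (K : ℝ) * (Real.log (4 / ρ ^ 2) / Real.log (1 / ρ ^ 2)) :=
  cosamp_iteration_count_general ρ hρ0 hρ1 r K hr a ha hsum
end

section
/- Let x_S ∈ ℝⁿ be K-sparse with support S, with sorted magnitudes x*_1 ≥ … ≥ x*_K and π(i) the index of the i-th largest-magnitude entry. Let ρ > 0 and let (S^m) be a sequence of index sets satisfying ‖(x_S)_{\overline{S^{m}}}‖ ≤ ρ·‖(x_S)_{\overline{S^{m-1}}}‖ for all m with n < m ≤ n+k. If {π(1),…,π(p)} ⊆ S^n and x*_{p+q} > ρ^k·√( Σ_{j=p+1}^K (x*_j)² ) for some 1 ≤ q with p+q ≤ K, then {π(1),…,π(p+q)} ⊆ S^{n+k}. -/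
open Finset

/-- generic support-capture step for algorithms whose support estimates
`S^m` obey the geometric decay `‖(x_S)_{\bar{S^m}}‖ ≤ ρ‖(x_S)_{\bar{S^{m-1}}}‖`.
Here `π` is 0-indexed: `π i` is the index of the `(i+1)`-th largest-magnitude entry
of `x_S`, so `x*_t = |x_S (π (t-1))|`. -/
theorem decay_support_capture
    {d K : ℕ} (xS : Fin d → ℝ)
    (π : ℕ → Fin d)
    (hπinj : ∀ i j, i < K → j < K → π i = π j → i = j)
    (hπsupp : supp xS ⊆ (Finset.range K).image π)
    (hπsort : ∀ i j, i ≤ j → j < K → |xS (π j)| ≤ |xS (π i)|)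
    (ρ : ℝ) (hρ : 0 < ρ)
    (S : ℕ → Finset (Fin d)) (n k : ℕ)
    (hdecay : ∀ m, n < m → m ≤ n + k →
      euclNorm (restrict xS (S m)ᶜ) ≤ ρ * euclNorm (restrict xS (S (m - 1))ᶜ))
    (p q : ℕ) (hq : 1 ≤ q) (hpqK : p + q ≤ K)
    (hstart : ∀ i < p, π i ∈ S n)
    (hgap : ρ ^ k * Real.sqrt (∑ j ∈ Finset.Ico p K, xS (π j) ^ 2) <
      |xS (π (p + q - 1))|) :
    ∀ i < p + q, π i ∈ S (n + k) := by

  intro i hi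
  by_contra hnot
  -- Step 1: iterate decay
  have hiter : ∀ j ≤ k, euclNorm (restrict xS (S (n + j))ᶜ) ≤
      ρ ^ j * euclNorm (restrict xS (S n)ᶜ) := by
    intro j hj
    induction j with
    | zero => simp
    | succ j ih =>
      have h1 := hdecay (n + j + 1) (by omega) (by omega)
      have heq : n + j + 1 - 1 = n + j := by omega
      rw [heq] at h1
      calc euclNorm (restrict xS (S (n + (j + 1)))ᶜ)
          = euclNorm (restrict xS (S (n + j + 1))ᶜ) := by ring_nf
        _ ≤ ρ * euclNorm (restrict xS (S (n + j))ᶜ) := h1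
        _ ≤ ρ * (ρ ^ j * euclNorm (restrict xS (S n)ᶜ)) :=
            mul_le_mul_of_nonneg_left (ih (by omega)) hρ.le
        _ = ρ ^ (j + 1) * euclNorm (restrict xS (S n)ᶜ) := by ring
  have hkbound := hiter k le_rfl
  -- Step 2: bound the tail at S n
  have hTbound : euclNorm (restrict xS (S n)ᶜ) ≤
      Real.sqrt (∑ j ∈ Finset.Ico p K, xS (π j) ^ 2) := by
    unfold euclNorm
    apply Real.sqrt_le_sqrt
    have hmem : ∀ x : Fin d, restrict xS (S n)ᶜ x ≠ 0 →
        x ∈ (Finset.Ico p K).image π := by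
      intro x hx
      have hxc : x ∈ (S n)ᶜ := by
        by_contra h
        simp [_root_.restrict, h] at hx
      have hxs : x ∈ supp xS := by
        simp only [supp, Finset.mem_filter, Finset.mem_univ, true_and]
        intro h0
        apply hx
        simp [_root_.restrict, h0]
      obtain ⟨j, hj, hjx⟩ := Finset.mem_image.mp (hπsupp hxs)
      rw [Finset.mem_range] at hj
      refine Finset.mem_image.mpr ⟨j, Finset.mem_Ico.mpr ⟨?_, hj⟩, hjx⟩
      by_contra hjp
      push_neg at hjp
      have := hstart j hjp
      rw [hjx] at this
      exact (Finset.mem_compl.mp hxc) this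
    calc ∑ x, restrict xS (S n)ᶜ x ^ 2
        = ∑ x ∈ (Finset.Ico p K).image π, restrict xS (S n)ᶜ x ^ 2 := by
          symm
          apply Finset.sum_subset (Finset.subset_univ _)
          intro x _ hx
          by_contra h
          exact hx (hmem x (fun h0 => h (by rw [h0]; ring)))
      _ ≤ ∑ x ∈ (Finset.Ico p K).image π, xS x ^ 2 := by
          apply Finset.sum_le_sum
          intro x _
          by_cases h : x ∈ (S n)ᶜ
          · simp [_root_.restrict, h]
          · simp only [_root_.restrict, if_neg h]
            simpa using sq_nonneg (xS x)
      _ = ∑ j ∈ Finset.Ico p K, xS (π j) ^ 2 := by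
          apply Finset.sum_image
          intro a ha b hb hab
          exact hπinj a b (Finset.mem_Ico.mp ha).2 (Finset.mem_Ico.mp hb).2 hab
  -- Step 3: single entry bound at S (n+k)
  have hsingle : |xS (π i)| ≤ euclNorm (restrict xS (S (n + k))ᶜ) := by
    unfold euclNorm
    rw [← Real.sqrt_sq_eq_abs]
    apply Real.sqrt_le_sqrt
    have hval : restrict xS (S (n + k))ᶜ (π i) = xS (π i) := by
      simp [_root_.restrict, Finset.mem_compl, hnot]
    calc xS (π i) ^ 2 = restrict xS (S (n + k))ᶜ (π i) ^ 2 := by rw [hval]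
      _ ≤ ∑ x, restrict xS (S (n + k))ᶜ x ^ 2 := by
          exact Finset.single_le_sum (f := fun x => restrict xS (S (n + k))ᶜ x ^ 2) (fun x _ => sq_nonneg _) (Finset.mem_univ _)
  -- Step 4: combine
  have hsort := hπsort i (p + q - 1) (by omega) (by omega)
  have : |xS (π (p + q - 1))| < |xS (π (p + q - 1))| := by
    calc |xS (π (p + q - 1))| ≤ |xS (π i)| := hsort
      _ ≤ euclNorm (restrict xS (S (n + k))ᶜ) := hsingle
      _ ≤ ρ ^ k * euclNorm (restrict xS (S n)ᶜ) := hkbound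
      _ ≤ ρ ^ k * Real.sqrt (∑ j ∈ Finset.Ico p K, xS (π j) ^ 2) :=
          mul_le_mul_of_nonneg_left hTbound (pow_nonneg hρ.le k)
      _ < |xS (π (p + q - 1))| := hgap
  exact absurd this (lt_irrefl _)
end
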